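/- The set {∫₀¹ f̂_λ(x) dx : λ a nonempty partition} is dense in the interval [0, 1/2]. -/

import Mathlib

/-!
A part equal to `1` contributes `1/2` to `∫₀¹ f̂_λ`, a part equal to `N` only `1/(N+1)`. Hence
the partition with `⌊2yN⌋` ones and `N - ⌊2yN⌋` parts equal to `N` has integral
`⌊2yN⌋/(2N) + O(1/N)`, which tends to `y` as `N → ∞`.
-/

/-- The normalized partition polynomial of a partition, given as the multiset of its parts:
`f̂_λ(x) = (1/ℓ(λ)) ∑_{p ∈ λ} x^p`. -/
noncomputable def normPoly (lam : Multiset ℕ) (x : ℝ) : ℝ :=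
  (lam.map fun p => x ^ p).sum / (Multiset.card lam : ℝ)

open Filter Topology

theorem integral_multiset_sum_pow (lam : Multiset ℕ) :
    ∫ x in (0:ℝ)..1, (lam.map fun p => x ^ p).sum = (lam.map fun p : ℕ => ((p:ℝ) + 1)⁻¹).sum := by
  induction lam using Multiset.induction_on with
  | empty => simp
  | cons p lam ih =>
    simp only [Multiset.map_cons, Multiset.sum_cons]
    rw [intervalIntegral.integral_add ((continuous_pow p).intervalIntegrable 0 1)
      ((continuous_multiset_sum _ fun q _ => continuous_pow q).intervalIntegrable 0 1),
      ih, integral_pow]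
    norm_num

theorem integral_normPoly (lam : Multiset ℕ) :
    ∫ x in (0:ℝ)..1, normPoly lam x
      = (lam.map fun p : ℕ => ((p:ℝ) + 1)⁻¹).sum / Multiset.card lam := by
  rw [← integral_multiset_sum_pow]
  exact intervalIntegral.integral_div _ _

theorem integral_normPoly_replicate_add (a b n : ℕ) :
    ∫ x in (0:ℝ)..1, normPoly (Multiset.replicate a 1 + Multiset.replicate b n) x
      = (a / 2 + b / (n + 1)) / (a + b) := by
  rw [integral_normPoly]
  simp only [Multiset.map_add, Multiset.map_replicate, Multiset.sum_add, Multiset.sum_replicate,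
    Multiset.card_add, Multiset.card_replicate, nsmul_eq_mul]
  push_cast
  ring

noncomputable def approxPartition (y : ℝ) (N : ℕ) : Multiset ℕ :=
  Multiset.replicate ⌊2 * y * N⌋₊ 1 + Multiset.replicate (N - ⌊2 * y * N⌋₊) N

theorem floor_two_mul_mul_le {y : ℝ} (hy : y ≤ 1 / 2) (N : ℕ) : ⌊2 * y * N⌋₊ ≤ N :=
  Nat.floor_le_of_le (by nlinarith [N.cast_nonneg (α := ℝ)])

theorem card_approxPartition {y : ℝ} (hy : y ≤ 1 / 2) (N : ℕ) :
    Multiset.card (approxPartition y N) = N := by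
  simp [approxPartition, floor_two_mul_mul_le hy N]

theorem tendsto_integral_normPoly_approxPartition {y : ℝ} (hy : y ∈ Set.Icc (0:ℝ) (1 / 2)) :
    Tendsto (fun N => ∫ x in (0:ℝ)..1, normPoly (approxPartition y N) x) atTop (𝓝 y) := by
  set r : ℕ → ℝ := fun N => ⌊2 * y * N⌋₊ / N
  have hr : Tendsto r atTop (𝓝 (2 * y)) :=
    (tendsto_nat_floor_mul_div_atTop (by linarith [hy.1])).comp tendsto_natCast_atTop_atTop
  have hlim : Tendsto (fun N : ℕ => r N / 2 + (1 - r N) * (1 / ((N:ℝ) + 1))) atTop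
      (𝓝 (2 * y / 2 + (1 - 2 * y) * 0)) :=
    (hr.div_const 2).add ((tendsto_const_nhds.sub hr).mul tendsto_one_div_add_atTop_nhds_zero_nat)
  rw [mul_zero, add_zero, mul_div_cancel_left₀ _ two_ne_zero] at hlim
  refine hlim.congr' ((eventually_ne_atTop 0).mono fun N hN => ?_)
  dsimp only [r]
  rw [approxPartition, integral_normPoly_replicate_add, Nat.cast_sub (floor_two_mul_mul_le hy.2 N),
    add_sub_cancel]
  field_simp [Nat.cast_ne_zero.2 hN]

theorem stmt18 :
    Set.Icc (0 : ℝ) (1 / 2) ⊆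
      closure {y : ℝ | ∃ lam : Multiset ℕ, lam ≠ 0 ∧ (∀ p ∈ lam, 0 < p) ∧
        (∫ x in (0:ℝ)..1, normPoly lam x) = y} := by
  intro y hy
  refine mem_closure_of_tendsto (tendsto_integral_normPoly_approxPartition hy)
    ((eventually_gt_atTop 0).mono fun N hN => ⟨approxPartition y N, ?_, ?_, rfl⟩)
  · rw [← Multiset.card_pos, card_approxPartition hy.2]
    exact hN
  · simp only [approxPartition, Multiset.mem_add, Multiset.mem_replicate]
    rintro p (⟨-, rfl⟩ | ⟨-, rfl⟩) <;> omega
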